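/- arXiv:2111.01031 — 3 statements merged into one kernel-verified Lean document; each statement's English description precedes it below -/
import Mathlib

section
/- The sensitivity index of R0 with respect to σ, i.e., (σ/R0)·∂R0/∂σ, equals σ·η·(d0+μ) / ((d0+μ+σ)·(d0(d0+μ+σ)(d0+h)+η(d0+μ))) and is strictly positive for positive parameters. -/
/-- The sensitivity index of `R0` with respect to `σ` equals
`σ η (d0+μ) / ((d0+μ+σ)(d0(d0+μ+σ)(d0+h)+η(d0+μ)))` and is strictly positive. -/
theorem sensitivity_sigma
    (lam γ d0 η μ σ h : ℝ)
    (hlam : 0 < lam) (hγ : 0 < γ) (hd0 : 0 < d0) (hη : 0 < η)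
    (hμ : 0 < μ) (hσ : 0 < σ) (hh : 0 < h)
    (R0 : ℝ → ℝ)
    (hR0 : ∀ s : ℝ, R0 s =
      γ * lam * (d0 + μ + s) / (d0 * (d0 + μ + s) * (d0 + h) + η * (d0 + μ))) :
    σ / R0 σ * deriv R0 σ =
      σ * η * (d0 + μ) /
        ((d0 + μ + σ) * (d0 * (d0 + μ + σ) * (d0 + h) + η * (d0 + μ))) ∧
    0 < σ / R0 σ * deriv R0 σ := by
  have hDpos : ∀ s : ℝ, 0 < s → 0 < d0 * (d0 + μ + s) * (d0 + h) + η * (d0 + μ) := by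
    intro s hs; positivity
  have hD : 0 < d0 * (d0 + μ + σ) * (d0 + h) + η * (d0 + μ) := hDpos σ hσ
  have hReq : R0 = fun s : ℝ =>
      γ * lam * (d0 + μ + s) / (d0 * (d0 + μ + s) * (d0 + h) + η * (d0 + μ)) :=
    funext hR0
  have hN : HasDerivAt (fun s : ℝ => γ * lam * (d0 + μ + s)) (γ * lam) σ := by
    simpa using ((hasDerivAt_id σ).const_add (d0 + μ)).const_mul (γ * lam)
  have hDd : HasDerivAt (fun s : ℝ => d0 * (d0 + μ + s) * (d0 + h) + η * (d0 + μ))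
      (d0 * (d0 + h)) σ := by
    have : HasDerivAt (fun s : ℝ => d0 * (d0 + μ + s) * (d0 + h)) (d0 * (d0 + h)) σ := by
      have h1 : HasDerivAt (fun s : ℝ => d0 * (d0 + μ + s)) d0 σ := by
        simpa using ((hasDerivAt_id σ).const_add (d0 + μ)).const_mul d0
      simpa using h1.mul_const (d0 + h)
    simpa using this.add_const (η * (d0 + μ))
  have hder : HasDerivAt R0
      ((γ * lam * (d0 * (d0 + μ + σ) * (d0 + h) + η * (d0 + μ)) -
        γ * lam * (d0 + μ + σ) * (d0 * (d0 + h))) /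
        (d0 * (d0 + μ + σ) * (d0 + h) + η * (d0 + μ)) ^ 2) σ := by
    rw [hReq]; exact hN.div hDd hD.ne'
  have hderiv := hder.deriv
  have hR0val := hR0 σ
  have hNpos : 0 < γ * lam * (d0 + μ + σ) := by positivity
  constructor
  · rw [hderiv, hR0val]
    field_simp
    ring
  · rw [hderiv, hR0val]
    have key : γ * lam * (d0 * (d0 + μ + σ) * (d0 + h) + η * (d0 + μ)) -
        γ * lam * (d0 + μ + σ) * (d0 * (d0 + h)) = γ * lam * (η * (d0 + μ)) := by ring
    rw [key]
    positivity
end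

section
/- The sensitivity index of R0 with respect to μ, i.e., (μ/R0)·∂R0/∂μ, is strictly negative whenever all parameters λ, γ, d0, η, μ, σ, h are strictly positive. -/
/-!
As a function of `μ`, `R0` is a Möbius function `(p μ + q) / (r μ + s)`, whose sensitivity index
is `μ (p s - q r) / ((p μ + q) (r μ + s))`. Here numerator and denominator of `R0` are positive and
`p s - q r = -γ λ η σ < 0`.
-/

theorem hasDerivAt_moebius (p q r s x : ℝ) (hx : r * x + s ≠ 0) :
    HasDerivAt (fun m => (p * m + q) / (r * m + s))
      ((p * s - q * r) / (r * x + s) ^ 2) x := by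
  have hnum : HasDerivAt (fun m => p * m + q) p x := by
    simpa using ((hasDerivAt_id x).const_mul p).add_const q
  have hden : HasDerivAt (fun m => r * m + s) r x := by
    simpa using ((hasDerivAt_id x).const_mul r).add_const s
  exact (hnum.div hden hx).congr_deriv (by ring)

theorem moebius_sensitivity_eq (p q r s x : ℝ) (hden : r * x + s ≠ 0) :
    x / ((p * x + q) / (r * x + s)) * deriv (fun m => (p * m + q) / (r * m + s)) x =
      x * (p * s - q * r) / ((p * x + q) * (r * x + s)) := by
  rw [(hasDerivAt_moebius p q r s x hden).deriv]
  field_simp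

/-- The sensitivity index of `R0` with respect to `μ` is strictly negative. -/
theorem sensitivity_mu_neg
    (lam γ d0 η μ σ h : ℝ)
    (hlam : 0 < lam) (hγ : 0 < γ) (hd0 : 0 < d0) (hη : 0 < η)
    (hμ : 0 < μ) (hσ : 0 < σ) (hh : 0 < h)
    (R0 : ℝ → ℝ)
    (hR0 : ∀ m : ℝ, R0 m =
      γ * lam * (d0 + m + σ) / (d0 * (d0 + m + σ) * (d0 + h) + η * (d0 + m))) :
    μ / R0 μ * deriv R0 μ < 0 := by
  set p := γ * lam
  set q := γ * lam * (d0 + σ)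
  set r := d0 * (d0 + h) + η
  set s := d0 * (d0 + σ) * (d0 + h) + η * d0
  have hR0_moebius : R0 = fun m => (p * m + q) / (r * m + s) :=
    funext fun m => by rw [hR0]; congr 1 <;> ring
  have hnum : 0 < p * μ + q := by positivity
  have hden : 0 < r * μ + s := by positivity
  have hdet : p * s - q * r = -(γ * lam * η * σ) := by ring
  rw [hR0_moebius, moebius_sensitivity_eq p q r s μ hden.ne', hdet]
  have hσterm : 0 < γ * lam * η * σ := by positivity
  exact div_neg_of_neg_of_pos (mul_neg_of_pos_of_neg hμ (neg_neg_of_pos hσterm)) (mul_pos hnum hden)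
end

section
/- With G as above and ‖𝒜‖ ≤ ρ, for any t₁, t₂ ∈ [0,τ] with t₂ ≤ t₁ one has |G(𝒜)(t₁) - G(𝒜)(t₂)| ≤ (C_Φρ + D_Φ)/(B(θ)Γ(θ)) · (t₁^θ - t₂^θ + 2(t₁ - t₂)^θ); in particular the family {G(𝒜) : ‖𝒜‖ ≤ ρ} is equicontinuous. -/
/-! Split `∫₀^{t₁} (t₁-ω)^{θ-1} f - ∫₀^{t₂} (t₂-ω)^{θ-1} f` into the integral of the kernel
difference over `[0,t₂]` and the tail `∫_{t₂}^{t₁} (t₁-ω)^{θ-1} f`. For `θ ≤ 1` the kernel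
`(t-ω)^{θ-1}` is nonnegative and decreasing in `t`, so both pieces are bounded by
`sup ‖f‖` times integrals of explicit powers, which evaluate to
`(t₂^θ - t₁^θ + (t₁-t₂)^θ)/θ` and `(t₁-t₂)^θ/θ`. The sup of `‖Φ(ω, 𝒜(ω))‖` is at most
`C_Φ ρ + D_Φ`, where `C_Φ ≥ 0` is forced by the growth bound holding for all `x`. -/

open MeasureTheory intervalIntegral Set

variable {E : Type*} [NormedAddCommGroup E] [NormedSpace ℝ E]

lemma nonneg_of_forall_mul_norm_add_nonneg [Nontrivial E] {C D : ℝ}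
    (h : ∀ x : E, 0 ≤ C * ‖x‖ + D) : 0 ≤ C := by
  by_contra! hC
  obtain ⟨x, hx⟩ := exists_norm_eq E (c := (|D| + 1) / -C)
    (div_nonneg (by positivity) (by linarith))
  have hCx : C * ‖x‖ = -(|D| + 1) := by
    rw [hx, mul_div_assoc', div_neg, mul_comm, mul_div_cancel_right₀ _ hC.ne]
  linarith [h x, le_abs_self D]

lemma intervalIntegrable_sub_rpow_sub_one {θ : ℝ} (hθ : 0 < θ) (s a b : ℝ) :
    IntervalIntegrable (fun ω : ℝ => (s - ω) ^ (θ - 1)) volume a b := by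
  simpa using (intervalIntegrable_rpow' (by linarith : (-1 : ℝ) < θ - 1)
    (a := s - a) (b := s - b)).comp_sub_left s

lemma integral_sub_rpow_sub_one {θ : ℝ} (hθ : 0 < θ) (s a b : ℝ) :
    ∫ ω in a..b, (s - ω) ^ (θ - 1) = ((s - a) ^ θ - (s - b) ^ θ) / θ := by
  rw [integral_comp_sub_left (fun x : ℝ => x ^ (θ - 1)) s,
    integral_rpow (Or.inl (by linarith)), sub_add_cancel]

lemma norm_integral_smul_le_mul_integral {k : ℝ → ℝ} {f : ℝ → E} {a b M : ℝ} (hab : a ≤ b)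
    (hk : IntervalIntegrable k volume a b) (hk0 : ∀ ω ∈ Ioo a b, 0 ≤ k ω)
    (hf : ∀ ω ∈ Ioo a b, ‖f ω‖ ≤ M) :
    ‖∫ ω in a..b, k ω • f ω‖ ≤ M * ∫ ω in a..b, k ω := by
  rw [← intervalIntegral.integral_const_mul]
  refine norm_integral_le_of_norm_le hab ?_ (hk.const_mul M)
  filter_upwards [Measure.ae_ne volume b] with ω hωb hω
  have hω' : ω ∈ Ioo a b := ⟨hω.1, lt_of_le_of_ne hω.2 hωb⟩
  rw [norm_smul, Real.norm_of_nonneg (hk0 ω hω'), mul_comm]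
  exact mul_le_mul_of_nonneg_right (hf ω hω') (hk0 ω hω')

noncomputable def powerKernelIntegral (θ : ℝ) (f : ℝ → E) (t : ℝ) : E :=
  ∫ ω in (0 : ℝ)..t, (t - ω) ^ (θ - 1) • f ω

section powerKernelIntegral

variable {θ t₁ t₂ : ℝ} {f : ℝ → E}

lemma powerKernelIntegral_sub_eq (hθ : 0 < θ) (hf : ContinuousOn f (Icc 0 t₁))
    (ht₂ : 0 ≤ t₂) (ht : t₂ ≤ t₁) :
    powerKernelIntegral θ f t₁ - powerKernelIntegral θ f t₂ =
      (∫ ω in (0 : ℝ)..t₂, ((t₁ - ω) ^ (θ - 1) - (t₂ - ω) ^ (θ - 1)) • f ω) +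
        ∫ ω in t₂..t₁, (t₁ - ω) ^ (θ - 1) • f ω := by
  have hf₂ : ContinuousOn f (uIcc 0 t₂) :=
    hf.mono (by rw [uIcc_of_le ht₂]; exact Icc_subset_Icc_right ht)
  have hf₁₂ : ContinuousOn f (uIcc t₂ t₁) :=
    hf.mono (by rw [uIcc_of_le ht]; exact Icc_subset_Icc_left ht₂)
  have hK₁ := (intervalIntegrable_sub_rpow_sub_one hθ t₁ 0 t₂).smul_continuousOn hf₂
  have hK₂ := (intervalIntegrable_sub_rpow_sub_one hθ t₂ 0 t₂).smul_continuousOn hf₂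
  have hK₁' := (intervalIntegrable_sub_rpow_sub_one hθ t₁ t₂ t₁).smul_continuousOn hf₁₂
  simp only [powerKernelIntegral, sub_smul]
  rw [← integral_add_adjacent_intervals hK₁ hK₁', integral_sub hK₁ hK₂]
  abel

lemma norm_integral_kernel_sub_smul_le (hθ0 : 0 < θ) (hθ1 : θ ≤ 1) (ht₂ : 0 ≤ t₂)
    (ht : t₂ ≤ t₁) {M : ℝ} (hM : ∀ ω ∈ Ioo 0 t₂, ‖f ω‖ ≤ M) :
    ‖∫ ω in (0 : ℝ)..t₂, ((t₁ - ω) ^ (θ - 1) - (t₂ - ω) ^ (θ - 1)) • f ω‖ ≤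
      M / θ * (t₂ ^ θ - t₁ ^ θ + (t₁ - t₂) ^ θ) := by
  have hK := intervalIntegrable_sub_rpow_sub_one hθ0
  have hswap : ∀ ω, ((t₁ - ω) ^ (θ - 1) - (t₂ - ω) ^ (θ - 1)) • f ω =
      -(((t₂ - ω) ^ (θ - 1) - (t₁ - ω) ^ (θ - 1)) • f ω) := fun ω => by
    rw [← neg_smul, neg_sub]
  have hmono : ∀ ω ∈ Ioo 0 t₂, 0 ≤ (t₂ - ω) ^ (θ - 1) - (t₁ - ω) ^ (θ - 1) :=
    fun ω hω => sub_nonneg.2 <|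
      Real.rpow_le_rpow_of_nonpos (by linarith [hω.2]) (by linarith) (by linarith)
  simp_rw [hswap, intervalIntegral.integral_neg, norm_neg]
  refine (norm_integral_smul_le_mul_integral ht₂ ((hK _ _ _).sub (hK _ _ _)) hmono hM).trans_eq ?_
  rw [integral_sub (hK _ _ _) (hK _ _ _), integral_sub_rpow_sub_one hθ0,
    integral_sub_rpow_sub_one hθ0]
  simp only [sub_self, sub_zero, Real.zero_rpow hθ0.ne']
  ring

lemma norm_integral_kernel_smul_le (hθ : 0 < θ) (ht : t₂ ≤ t₁) {M : ℝ}
    (hM : ∀ ω ∈ Ioo t₂ t₁, ‖f ω‖ ≤ M) :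
    ‖∫ ω in t₂..t₁, (t₁ - ω) ^ (θ - 1) • f ω‖ ≤ M / θ * (t₁ - t₂) ^ θ := by
  refine (norm_integral_smul_le_mul_integral ht (intervalIntegrable_sub_rpow_sub_one hθ _ _ _)
    (fun ω hω => Real.rpow_nonneg (by linarith [hω.2]) _) hM).trans_eq ?_
  rw [integral_sub_rpow_sub_one hθ, sub_self, Real.zero_rpow hθ.ne']
  ring

theorem norm_powerKernelIntegral_sub_le (hθ0 : 0 < θ) (hθ1 : θ ≤ 1)
    (hf : ContinuousOn f (Icc 0 t₁)) (ht₂ : 0 ≤ t₂) (ht : t₂ ≤ t₁) {M : ℝ}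
    (hM : ∀ ω ∈ Icc 0 t₁, ‖f ω‖ ≤ M) :
    ‖powerKernelIntegral θ f t₁ - powerKernelIntegral θ f t₂‖ ≤
      M / θ * (t₂ ^ θ - t₁ ^ θ + 2 * (t₁ - t₂) ^ θ) := by
  rw [powerKernelIntegral_sub_eq hθ0 hf ht₂ ht]
  calc _ ≤ M / θ * (t₂ ^ θ - t₁ ^ θ + (t₁ - t₂) ^ θ) + M / θ * (t₁ - t₂) ^ θ :=
        (norm_add_le _ _).trans <| add_le_add
          (norm_integral_kernel_sub_smul_le hθ0 hθ1 ht₂ ht fun ω hω =>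
            hM ω ⟨hω.1.le, by linarith [hω.2]⟩)
          (norm_integral_kernel_smul_le hθ0 ht fun ω hω =>
            hM ω ⟨by linarith [hω.1], hω.2.le⟩)
    _ = _ := by ring

end powerKernelIntegral

theorem G_equicontinuous_general
    (τ θ B CΦ DΦ ρ : ℝ) (hτ : 0 < τ) (hθ0 : 0 < θ) (hθ1 : θ ≤ 1) (hB : 0 < B)
    (Φ : ℝ → EuclideanSpace ℝ (Fin 3) → EuclideanSpace ℝ (Fin 3))
    (hΦcont : Continuous fun p : ℝ × EuclideanSpace ℝ (Fin 3) => Φ p.1 p.2)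
    (hΦgrowth : ∀ t ∈ Set.Icc (0 : ℝ) τ, ∀ x, ‖Φ t x‖ ≤ CΦ * ‖x‖ + DΦ)
    (G : C(Set.Icc (0:ℝ) τ, EuclideanSpace ℝ (Fin 3)) →
         C(Set.Icc (0:ℝ) τ, EuclideanSpace ℝ (Fin 3)))
    (hG : ∀ A t, G A t =
      (θ / (B * Real.Gamma θ)) •
        ∫ ω in (0:ℝ)..(t : ℝ), ((t : ℝ) - ω) ^ (θ - 1) •
          Φ ω (Set.IccExtend hτ.le A ω)) :
    ∀ A, ‖A‖ ≤ ρ → ∀ t₁ t₂ : Set.Icc (0:ℝ) τ, (t₂ : ℝ) ≤ (t₁ : ℝ) →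
      ‖G A t₁ - G A t₂‖ ≤
        (CΦ * ρ + DΦ) / (B * Real.Gamma θ) *
          ((t₁ : ℝ) ^ θ - (t₂ : ℝ) ^ θ + 2 * ((t₁ : ℝ) - (t₂ : ℝ)) ^ θ) := by
  intro A hA t₁ t₂ ht
  set f : ℝ → EuclideanSpace ℝ (Fin 3) := fun ω => Φ ω (Set.IccExtend hτ.le A ω)
  have hf : Continuous f :=
    hΦcont.comp (continuous_id.prodMk (A.continuous.comp continuous_projIcc))
  have hCΦ : 0 ≤ CΦ := nonneg_of_forall_mul_norm_add_nonneg fun x =>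
    (norm_nonneg _).trans (hΦgrowth 0 ⟨le_rfl, hτ.le⟩ x)
  have hfM : ∀ ω ∈ Icc 0 (t₁ : ℝ), ‖f ω‖ ≤ CΦ * ρ + DΦ := fun ω hω =>
    (hΦgrowth ω ⟨hω.1, hω.2.trans t₁.2.2⟩ _).trans <| by
      gcongr
      exact (A.norm_coe_le_norm _).trans hA
  have hM : 0 ≤ CΦ * ρ + DΦ := (norm_nonneg _).trans (hfM 0 ⟨le_rfl, t₁.2.1⟩)
  have hpow : (t₂ : ℝ) ^ θ ≤ (t₁ : ℝ) ^ θ := Real.rpow_le_rpow t₂.2.1 ht hθ0.le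
  have hΓ := Real.Gamma_pos_of_pos hθ0
  rw [hG, hG, ← smul_sub, norm_smul, Real.norm_of_nonneg (by positivity)]
  calc _ ≤ θ / (B * Real.Gamma θ) * ((CΦ * ρ + DΦ) / θ *
        ((t₂ : ℝ) ^ θ - (t₁ : ℝ) ^ θ + 2 * ((t₁ : ℝ) - t₂) ^ θ)) := by
        gcongr
        exact norm_powerKernelIntegral_sub_le hθ0 hθ1 hf.continuousOn t₂.2.1 ht hfM
    _ ≤ _ := by
        rw [← mul_assoc, show θ / (B * Real.Gamma θ) * ((CΦ * ρ + DΦ) / θ) =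
          (CΦ * ρ + DΦ) / (B * Real.Gamma θ) by field_simp]
        gcongr

/-- Equicontinuity estimate for the fractional integral operator `G`:
for `t₂ ≤ t₁` in `[0,τ]` and `‖𝒜‖ ≤ ρ`,
`|G(𝒜)(t₁) - G(𝒜)(t₂)| ≤ (C_Φρ+D_Φ)/(BΓ(θ)) (t₁^θ - t₂^θ + 2(t₁-t₂)^θ)`. -/
theorem G_equicontinuous
    (τ θ B CΦ DΦ ρ : ℝ) (hτ : 0 < τ) (hθ0 : 0 < θ) (hθ1 : θ ≤ 1) (hB : 0 < B)
    (hρ : 0 ≤ ρ)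
    (Φ : ℝ → EuclideanSpace ℝ (Fin 3) → EuclideanSpace ℝ (Fin 3))
    (hΦcont : Continuous fun p : ℝ × EuclideanSpace ℝ (Fin 3) => Φ p.1 p.2)
    (hΦgrowth : ∀ t ∈ Set.Icc (0 : ℝ) τ, ∀ x, ‖Φ t x‖ ≤ CΦ * ‖x‖ + DΦ)
    (G : C(Set.Icc (0:ℝ) τ, EuclideanSpace ℝ (Fin 3)) →
         C(Set.Icc (0:ℝ) τ, EuclideanSpace ℝ (Fin 3)))
    (hG : ∀ A t, G A t =
      (θ / (B * Real.Gamma θ)) •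
        ∫ ω in (0:ℝ)..(t : ℝ), ((t : ℝ) - ω) ^ (θ - 1) •
          Φ ω (Set.IccExtend hτ.le A ω)) :
    ∀ A, ‖A‖ ≤ ρ → ∀ t₁ t₂ : Set.Icc (0:ℝ) τ, (t₂ : ℝ) ≤ (t₁ : ℝ) →
      ‖G A t₁ - G A t₂‖ ≤
        (CΦ * ρ + DΦ) / (B * Real.Gamma θ) *
          ((t₁ : ℝ) ^ θ - (t₂ : ℝ) ^ θ + 2 * ((t₁ : ℝ) - (t₂ : ℝ)) ^ θ) :=
  G_equicontinuous_general τ θ B CΦ DΦ ρ hτ hθ0 hθ1 hB Φ hΦcont hΦgrowth G hG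
end
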